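/- The CaseCase rewriting rule of the lambda calculus with constructors is strongly normalising: there is no infinite sequence of CaseCase reduction steps. -/

import Mathlib

/- Terms of the lambda calculus with `n` constructors (de Bruijn indices).
`Ob n` plays the role of `Option (Tm n)`: a case-binding is a partial map
`Fin n → Ob n` from constructors to terms. -/
mutual
inductive Tm (n : ℕ) : Type where
  | var : ℕ → Tm n
  | app : Tm n → Tm n → Tm n
  | lam : Tm n → Tm n
  | cst : Fin n → Tm n
  | cas : (Fin n → Ob n) → Tm n → Tm n
inductive Ob (n : ℕ) : Type where
  | none : Ob n
  | some : Tm n → Ob n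
end

namespace LC

variable {n : ℕ}

/- Shift free de Bruijn indices `≥ k` by `d`. -/
mutual
def lift (d k : ℕ) : Tm n → Tm n
  | .var i => .var (if i < k then i else i + d)
  | .app t u => .app (lift d k t) (lift d k u)
  | .lam t => .lam (lift d (k+1) t)
  | .cst c => .cst c
  | .cas θ t => .cas (fun c => liftO d k (θ c)) (lift d k t)
def liftO (d k : ℕ) : Ob n → Ob n
  | .none => .none
  | .some t => .some (lift d k t)
end

/- Lift a case-binding (used for the CaseLam rule, where the bound variable
must not occur free in the binding). -/
def liftB (θ : Fin n → Ob n) : Fin n → Ob n := fun c => liftO 1 0 (θ c)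

/- Substitution of `u` for the variable `k` (capture-avoiding). -/
mutual
def subst (u : Tm n) (k : ℕ) : Tm n → Tm n
  | .var i => if i < k then .var i else if i = k then lift k 0 u else .var (i-1)
  | .app t v => .app (subst u k t) (subst u k v)
  | .lam t => .lam (subst u (k+1) t)
  | .cst c => .cst c
  | .cas θ t => .cas (fun c => substO u k (θ c)) (subst u k t)
def substO (u : Tm n) (k : ℕ) : Ob n → Ob n
  | .none => .none
  | .some t => .some (subst u k t)
end

/- `{θ}·(-)` applied inside an optional branch. -/
def casO (θ : Fin n → Ob n) : Ob n → Ob n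
  | .none => .none
  | .some u => .some (.cas θ u)

/- Composition of case-bindings: `(θ∘φ)(c) = {θ}·φ(c)` for `c ∈ dom φ`. -/
def compB (θ φ : Fin n → Ob n) : Fin n → Ob n := fun c => casO θ (φ c)

/- One-step reduction of the lambda calculus with constructors:
AppLam, LamApp, CaseCons, CaseApp, CaseLam, CaseCase, closed under all contexts. -/
inductive Step : Tm n → Tm n → Prop where
  | appLam (t u : Tm n) : Step (.app (.lam t) u) (subst u 0 t)
  | lamApp (t : Tm n) : Step (.lam (.app (lift 1 0 t) (.var 0))) t
  | caseCons (θ : Fin n → Ob n) (c : Fin n) (u : Tm n) :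
      θ c = .some u → Step (.cas θ (.cst c)) u
  | caseApp (θ : Fin n → Ob n) (t u : Tm n) :
      Step (.cas θ (.app t u)) (.app (.cas θ t) u)
  | caseLam (θ : Fin n → Ob n) (t : Tm n) :
      Step (.cas θ (.lam t)) (.lam (.cas (liftB θ) t))
  | caseCase (θ φ : Fin n → Ob n) (t : Tm n) :
      Step (.cas θ (.cas φ t)) (.cas (compB θ φ) t)
  | appL {t t' : Tm n} (u : Tm n) : Step t t' → Step (.app t u) (.app t' u)
  | appR (t : Tm n) {u u' : Tm n} : Step u u' → Step (.app t u) (.app t u')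
  | lamC {t t' : Tm n} : Step t t' → Step (.lam t) (.lam t')
  | casT (θ : Fin n → Ob n) {t t' : Tm n} : Step t t' → Step (.cas θ t) (.cas θ t')
  | casB (θ : Fin n → Ob n) (c : Fin n) {u u' : Tm n} (t : Tm n) :
      θ c = .some u → Step u u' →
      Step (.cas θ t) (.cas (Function.update θ c (.some u')) t)

/- One-step reduction by the CaseCase rule only (closed under all contexts). -/
inductive StepCC : Tm n → Tm n → Prop where
  | caseCase (θ φ : Fin n → Ob n) (t : Tm n) :
      StepCC (.cas θ (.cas φ t)) (.cas (compB θ φ) t)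
  | appL {t t' : Tm n} (u : Tm n) : StepCC t t' → StepCC (.app t u) (.app t' u)
  | appR (t : Tm n) {u u' : Tm n} : StepCC u u' → StepCC (.app t u) (.app t u')
  | lamC {t t' : Tm n} : StepCC t t' → StepCC (.lam t) (.lam t')
  | casT (θ : Fin n → Ob n) {t t' : Tm n} : StepCC t t' → StepCC (.cas θ t) (.cas θ t')
  | casB (θ : Fin n → Ob n) (c : Fin n) {u u' : Tm n} (t : Tm n) :
      θ c = .some u → StepCC u u' →
      StepCC (.cas θ t) (.cas (Function.update θ c (.some u')) t)

/- One-step reduction λC⁻ : every rule except CaseCase (closed under all contexts). -/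
inductive StepM : Tm n → Tm n → Prop where
  | appLam (t u : Tm n) : StepM (.app (.lam t) u) (subst u 0 t)
  | lamApp (t : Tm n) : StepM (.lam (.app (lift 1 0 t) (.var 0))) t
  | caseCons (θ : Fin n → Ob n) (c : Fin n) (u : Tm n) :
      θ c = .some u → StepM (.cas θ (.cst c)) u
  | caseApp (θ : Fin n → Ob n) (t u : Tm n) :
      StepM (.cas θ (.app t u)) (.app (.cas θ t) u)
  | caseLam (θ : Fin n → Ob n) (t : Tm n) :
      StepM (.cas θ (.lam t)) (.lam (.cas (liftB θ) t))
  | appL {t t' : Tm n} (u : Tm n) : StepM t t' → StepM (.app t u) (.app t' u)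
  | appR (t : Tm n) {u u' : Tm n} : StepM u u' → StepM (.app t u) (.app t u')
  | lamC {t t' : Tm n} : StepM t t' → StepM (.lam t) (.lam t')
  | casT (θ : Fin n → Ob n) {t t' : Tm n} : StepM t t' → StepM (.cas θ t) (.cas θ t')
  | casB (θ : Fin n → Ob n) (c : Fin n) {u u' : Tm n} (t : Tm n) :
      θ c = .some u → StepM u u' →
      StepM (.cas θ t) (.cas (Function.update θ c (.some u')) t)

/- A term is defined when none of its subterms is a match failure `{θ}·c` with
`c ∉ dom θ`. -/
inductive Defined : Tm n → Prop where
  | var (i : ℕ) : Defined (.var i)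
  | cst (c : Fin n) : Defined (.cst c)
  | app {t u : Tm n} : Defined t → Defined u → Defined (.app t u)
  | lam {t : Tm n} : Defined t → Defined (.lam t)
  | cas {θ : Fin n → Ob n} {t : Tm n} :
      (∀ c u, θ c = .some u → Defined u) → Defined t →
      (∀ c, t = .cst c → θ c ≠ .none) → Defined (.cas θ t)

/- Hereditarily defined: every reduct (in any number of steps) is defined. -/
def HD (t : Tm n) : Prop := ∀ u, Relation.ReflTransGen Step t u → Defined u

section Completion
variable [NeZero n]

/- The canonical match failure `{}·c₁` used to fill missing branches. -/
def failTm : Tm n := .cas (fun _ => .none) (.cst 0)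

/- Case-completion: replace every case-binding by its total completion,
filling each missing branch with `{}·c₁`. -/
mutual
def cpl : Tm n → Tm n
  | .var i => .var i
  | .app t u => .app (cpl t) (cpl u)
  | .lam t => .lam (cpl t)
  | .cst c => .cst c
  | .cas θ t => .cas (fun c => .some (cplO (θ c))) (cpl t)
def cplO : Ob n → Tm n
  | .none => failTm
  | .some u => cpl u
end

end Completion

/- The structural measure μ. -/
mutual
def mes : Tm n → ℕ
  | .var _ => 1
  | .cst _ => 1
  | .lam t => mes t + 1
  | .app t u => mes t + mes u
  | .cas θ t => mes t * ((∑ c : Fin n, mesO (θ c)) + 2)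
def mesO : Ob n → ℕ
  | .none => 0
  | .some t => mes t
end

end LC

/-!
Every CaseCase step strictly decreases the measure `μ = mes`. At the redex
`{θ}·({φ}·t)`, with `A = Σ μ(φ c)` and `B = Σ μ(θ c)`, it drops from `μ(t)(A+2)(B+2)`
to `μ(t)(A(B+2)+2)`: each branch of `φ` absorbs the factor `B+2`, but the constant `2`
escapes it. Since `μ` is positive, it is strictly monotone in every argument, so the
decrease survives under any context.
-/

namespace LC

variable {n : ℕ}

theorem mes_pos : ∀ t : Tm n, 0 < mes t
  | .var _ | .cst _ => Nat.one_pos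
  | .lam t => Nat.succ_pos (mes t)
  | .app t _ => Nat.add_pos_left (mes_pos t) _
  | .cas _ t => Nat.mul_pos (mes_pos t) (Nat.succ_pos _)

theorem mesO_casO (θ : Fin n → Ob n) (o : Ob n) :
    mesO (casO θ o) = mesO o * ((∑ c, mesO (θ c)) + 2) := by
  cases o <;> simp [casO, mesO, mes]

theorem sum_mesO_compB (θ φ : Fin n → Ob n) :
    ∑ c, mesO (compB θ φ c) = (∑ c, mesO (φ c)) * ((∑ c, mesO (θ c)) + 2) := by
  simp only [compB, mesO_casO, Finset.sum_mul]

theorem mes_cas_compB_lt (θ φ : Fin n → Ob n) (t : Tm n) :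
    mes (.cas (compB θ φ) t) < mes (.cas θ (.cas φ t)) := by
  simp only [mes, sum_mesO_compB, mul_assoc]
  refine Nat.mul_lt_mul_of_pos_left ?_ (mes_pos t)
  set A := ∑ c, mesO (φ c)
  set B := ∑ c, mesO (θ c)
  calc A * (B + 2) + 2 < A * (B + 2) + 2 * (B + 2) := by omega
    _ = (A + 2) * (B + 2) := by ring

theorem sum_mesO_update_lt {θ : Fin n → Ob n} {c : Fin n} {u u' : Tm n}
    (hc : θ c = .some u) (hu : mes u' < mes u) :
    ∑ x, mesO (Function.update θ c (.some u') x) < ∑ x, mesO (θ x) := by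
  refine Finset.sum_lt_sum (fun x _ => ?_) ⟨c, Finset.mem_univ c, ?_⟩
  · rcases eq_or_ne x c with rfl | hx
    · simpa [mesO, hc] using hu.le
    · rw [Function.update_of_ne hx]
  · simpa [mesO, hc] using hu

theorem mes_lt_of_stepCC {t t' : Tm n} (h : StepCC t t') : mes t' < mes t := by
  induction h with
  | caseCase θ φ t => exact mes_cas_compB_lt θ φ t
  | appL _ _ ih | appR _ _ ih => simp only [mes]; omega
  | lamC _ ih => simp only [mes]; omega
  | casT _ _ ih => exact Nat.mul_lt_mul_of_pos_right ih (Nat.succ_pos _)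
  | casB _ _ t hc _ ih =>
    exact Nat.mul_lt_mul_of_pos_left (Nat.add_lt_add_right (sum_mesO_update_lt hc ih) 2)
      (mes_pos t)

theorem wellFounded_flip_stepCC : WellFounded (flip (StepCC (n := n))) :=
  Subrelation.wf (fun h => mes_lt_of_stepCC h) (measure mes).wf

/-- The CaseCase rewriting rule is strongly normalising: there is no infinite
sequence of CaseCase reduction steps. -/
theorem stepCC_strongly_normalising {n : ℕ} :
    ¬ ∃ f : ℕ → Tm n, ∀ i, StepCC (f i) (f (i+1)) := by
  rintro ⟨f, hf⟩
  exact (wellFounded_iff_isEmpty_descending_chain.1 wellFounded_flip_stepCC).false ⟨f, hf⟩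

end LC
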